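/- For every nonnegative integer n and all complex numbers a, b, c, one has (a)^(n) · (b)^(n) = ∑_{k=0}^{n} (−1)^k · C(n, k) · (a + b + c + n − 1)^(k) · (c + b + k)^(n−k) · (c)^(k) · (a + c + k)^(n−k). -/

import Mathlib

/-- The rising factorial (Pochhammer symbol) `(y)^(k) = y(y+1)⋯(y+k-1)`. -/
noncomputable def risingFactorial (x : ℂ) (n : ℕ) : ℂ :=
  ∏ i ∈ Finset.range n, (x + i)

lemma rf_zero (x : ℂ) : risingFactorial x 0 = 1 := by simp [risingFactorial]

lemma rf_succ (x : ℂ) (n : ℕ) :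
    risingFactorial x (n + 1) = risingFactorial x n * (x + n) :=
  Finset.prod_range_succ _ _

lemma rf_add (x : ℂ) (m k : ℕ) :
    risingFactorial x (m + k) = risingFactorial x m * risingFactorial (x + m) k := by
  unfold risingFactorial
  rw [Finset.prod_range_add]
  congr 1
  refine Finset.prod_congr rfl fun i _ => ?_
  push_cast
  ring

lemma rf_reflect (x : ℂ) (j : ℕ) :
    risingFactorial (1 - x - j) j = (-1) ^ j * risingFactorial x j := by
  unfold risingFactorial
  rw [← Finset.prod_range_reflect (fun i => (1 - x - (j:ℂ) + i))]
  have : ∀ i ∈ Finset.range j, (1 - x - (j:ℂ) + (j - 1 - i : ℕ)) = -(x + i) := by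
    intro i hi
    rw [Finset.mem_range] at hi
    have : ((j - 1 - i : ℕ) : ℂ) = (j : ℂ) - 1 - i := by
      have h1 : (1:ℕ) + i ≤ j := by omega
      push_cast [Nat.cast_sub (by omega : i ≤ j - 1), Nat.cast_sub (by omega : 1 ≤ j)]
      ring
    rw [this]; ring
  rw [Finset.prod_congr rfl this]
  have : ∀ i ∈ Finset.range j, -(x + (i:ℂ)) = (-1) * (x + i) := fun i _ => by ring
  rw [Finset.prod_congr rfl this, Finset.prod_mul_distrib, Finset.prod_const,
    Finset.card_range]

lemma rf_vandermonde (x y : ℂ) (n : ℕ) :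
    risingFactorial (x + y) n =
      ∑ k ∈ Finset.range (n + 1),
        (n.choose k : ℂ) * risingFactorial x k * risingFactorial y (n - k) := by
  induction n with
  | zero => simp [rf_zero]
  | succ n ih =>
    rw [rf_succ, ih, Finset.sum_mul]
    have hsplit : ∀ k ∈ Finset.range (n + 1),
        (n.choose k : ℂ) * risingFactorial x k * risingFactorial y (n - k) * (x + y + n)
        = (n.choose k : ℂ) * risingFactorial x (k + 1) * risingFactorial y (n - k)
          + (n.choose k : ℂ) * risingFactorial x k * risingFactorial y (n - k + 1) := by
      intro k hk
      rw [Finset.mem_range] at hk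
      rw [rf_succ, rf_succ]
      have : ((n - k : ℕ) : ℂ) = (n : ℂ) - k := by
        push_cast [Nat.cast_sub (by omega : k ≤ n)]; ring
      rw [this]; ring
    rw [Finset.sum_congr rfl hsplit, Finset.sum_add_distrib]
    -- A := first sum, B := second sum
    have hB : (∑ k ∈ Finset.range (n + 1),
          (n.choose k : ℂ) * risingFactorial x k * risingFactorial y (n - k + 1))
        = risingFactorial y (n + 1) + ∑ k ∈ Finset.range n,
            (n.choose (k+1) : ℂ) * risingFactorial x (k+1) * risingFactorial y (n - k) := by
      rw [Finset.sum_range_succ' (fun k => (n.choose k : ℂ) * risingFactorial x k *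
        risingFactorial y (n - k + 1)) n]
      rw [add_comm]
      congr 1
      · simp [rf_zero]
      · refine Finset.sum_congr rfl fun k hk => ?_
        rw [Finset.mem_range] at hk
        congr 2
        omega
    rw [hB]
    -- target side
    rw [Finset.sum_range_succ' (fun k => ((n+1).choose k : ℂ) * risingFactorial x k *
      risingFactorial y (n + 1 - k)) (n+1)]
    simp only [Nat.choose_succ_succ, Nat.choose_zero_right, Nat.cast_one, Nat.cast_add]
    have : ∀ k ∈ Finset.range (n + 1),
        ((n.choose k : ℂ) + (n.choose (k+1) : ℂ)) * risingFactorial x (k+1) *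
          risingFactorial y (n + 1 - (k+1))
        = (n.choose k : ℂ) * risingFactorial x (k+1) * risingFactorial y (n - k)
          + (n.choose (k+1) : ℂ) * risingFactorial x (k+1) * risingFactorial y (n - k) := by
      intro k hk
      have : n + 1 - (k + 1) = n - k := by omega
      rw [this]; ring
    rw [Finset.sum_congr rfl this, Finset.sum_add_distrib]
    have hlast : ∑ k ∈ Finset.range (n+1),
        (n.choose (k+1) : ℂ) * risingFactorial x (k+1) * risingFactorial y (n - k)
        = ∑ k ∈ Finset.range n,
        (n.choose (k+1) : ℂ) * risingFactorial x (k+1) * risingFactorial y (n - k) := by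
      rw [Finset.sum_range_succ, Nat.choose_succ_self]
      simp
    rw [hlast]
    simp [rf_zero, rf_succ]
    ring

lemma alt_sum_choose (m : ℕ) :
    ∑ k ∈ Finset.range (m + 1), (-1 : ℂ) ^ k * (m.choose k : ℂ)
      = if m = 0 then 1 else 0 := by
  have h := Int.alternating_sum_range_choose (n := m)
  have h2 := congrArg (Int.cast : ℤ → ℂ) h
  push_cast at h2
  rw [h2]

lemma trinom {m k j : ℕ} (h : k + j ≤ m) :
    m.choose k * (m - k).choose j = m.choose j * (m - j).choose k := by
  have h1 := Nat.choose_mul (n := m) (k := k + j) (s := k) (Nat.le_add_right k j)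
  have h2 := Nat.choose_mul (n := m) (k := k + j) (s := j) (Nat.le_add_left j k)
  have e1 : k + j - k = j := by omega
  have e2 : k + j - j = k := by omega
  rw [e1] at h1
  rw [e2] at h2
  have e3 : (k + j).choose k = (k + j).choose j := by
    rw [← Nat.choose_symm (Nat.le_add_left j k), e2]
  rw [e3] at h1
  omega

lemma sum_triangle_swap (f : ℕ → ℕ → ℂ) (n : ℕ) :
    ∑ k ∈ Finset.range (n + 1), ∑ j ∈ Finset.range (n + 1 - k), f k j
      = ∑ j ∈ Finset.range (n + 1), ∑ k ∈ Finset.range (n + 1 - j), f k j := by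
  refine Finset.sum_comm' ?_
  intro k j
  simp only [Finset.mem_range]
  omega

lemma rf_T (b d : ℂ) (m : ℕ) :
    ∑ k ∈ Finset.range (m + 1),
        (-1) ^ k * (m.choose k : ℂ) * risingFactorial b k * risingFactorial (d + k) (m - k)
      = risingFactorial (d - b) m := by
  have step1 : ∀ k ∈ Finset.range (m + 1),
      (-1 : ℂ) ^ k * (m.choose k : ℂ) * risingFactorial b k * risingFactorial (d + k) (m - k)
      = ∑ j ∈ Finset.range (m + 1 - k),
          (-1) ^ k * (m.choose k : ℂ) * ((m - k).choose j : ℂ) *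
            risingFactorial (d - b) j * risingFactorial b (m - j) := by
    intro k hk
    rw [Finset.mem_range] at hk
    have hdk : d + (k : ℂ) = (d - b) + (b + k) := by ring
    rw [hdk, rf_vandermonde]
    have e1 : m - k + 1 = m + 1 - k := by omega
    rw [e1, Finset.mul_sum]
    refine Finset.sum_congr rfl fun j hj => ?_
    rw [Finset.mem_range] at hj
    have e2 : risingFactorial b k * risingFactorial (b + k) (m - k - j)
        = risingFactorial b (m - j) := by
      rw [← rf_add]
      congr 1
      omega
    calc (-1 : ℂ) ^ k * (m.choose k : ℂ) * risingFactorial b k *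
          (((m - k).choose j : ℂ) * risingFactorial (d - b) j *
            risingFactorial (b + k) (m - k - j))
        = (-1) ^ k * (m.choose k : ℂ) * ((m - k).choose j : ℂ) *
            risingFactorial (d - b) j *
            (risingFactorial b k * risingFactorial (b + k) (m - k - j)) := by ring
      _ = _ := by rw [e2]
  rw [Finset.sum_congr rfl step1, sum_triangle_swap]
  have step2 : ∀ j ∈ Finset.range (m + 1),
      (∑ k ∈ Finset.range (m + 1 - j),
        (-1 : ℂ) ^ k * (m.choose k : ℂ) * ((m - k).choose j : ℂ) *
          risingFactorial (d - b) j * risingFactorial b (m - j))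
      = (m.choose j : ℂ) * risingFactorial (d - b) j * risingFactorial b (m - j) *
          (if m - j = 0 then 1 else 0) := by
    intro j hj
    rw [Finset.mem_range] at hj
    have e3 : ∀ k ∈ Finset.range (m + 1 - j),
        (-1 : ℂ) ^ k * (m.choose k : ℂ) * ((m - k).choose j : ℂ) *
          risingFactorial (d - b) j * risingFactorial b (m - j)
        = (m.choose j : ℂ) * risingFactorial (d - b) j * risingFactorial b (m - j) *
            ((-1) ^ k * ((m - j).choose k : ℂ)) := by
      intro k hk
      rw [Finset.mem_range] at hk
      have := trinom (m := m) (k := k) (j := j) (by omega)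
      have hc : (m.choose k : ℂ) * ((m - k).choose j : ℂ)
          = (m.choose j : ℂ) * ((m - j).choose k : ℂ) := by exact_mod_cast this
      calc (-1 : ℂ) ^ k * (m.choose k : ℂ) * ((m - k).choose j : ℂ) *
            risingFactorial (d - b) j * risingFactorial b (m - j)
          = (-1) ^ k * ((m.choose k : ℂ) * ((m - k).choose j : ℂ)) *
            risingFactorial (d - b) j * risingFactorial b (m - j) := by ring
        _ = _ := by rw [hc]; ring
    rw [Finset.sum_congr rfl e3, ← Finset.mul_sum]
    have e4 : m + 1 - j = (m - j) + 1 := by omega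
    rw [e4, alt_sum_choose]
  rw [Finset.sum_congr rfl step2]
  rw [Finset.sum_eq_single m]
  · simp [rf_zero]
  · intro j hj hne
    rw [Finset.mem_range] at hj
    have : ¬ (m - j = 0) := by omega
    simp [this]
  · intro h
    simp at h

lemma neg_one_pow_pair (j : ℕ) : (-1 : ℂ) ^ j * (-1) ^ j = 1 := by
  rw [← pow_add, ← two_mul, pow_mul]; norm_num

theorem stmt_11 (n : ℕ) (a b c : ℂ) :
    risingFactorial a n * risingFactorial b n =
      ∑ k ∈ Finset.range (n + 1),
        (-1) ^ k * (n.choose k : ℂ) * risingFactorial (a + b + c + n - 1) k *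
          risingFactorial (c + b + k) (n - k) * risingFactorial c k *
            risingFactorial (a + c + k) (n - k) := by
  symm
  have step1 : ∀ k ∈ Finset.range (n + 1),
      (-1 : ℂ) ^ k * (n.choose k : ℂ) * risingFactorial (a + b + c + n - 1) k *
        risingFactorial (c + b + k) (n - k) * risingFactorial c k *
          risingFactorial (a + c + k) (n - k)
      = ∑ j ∈ Finset.range (n + 1 - k),
          (-1 : ℂ) ^ k * (n.choose k : ℂ) * ((n - k).choose j : ℂ) *
            risingFactorial (1 - a - n) j * risingFactorial (a + b + c + n - 1) (n - j) *
              risingFactorial c k * risingFactorial (a + c + k) (n - j - k) *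
                risingFactorial (a + c + (n - j : ℕ)) j := by
    intro k hk
    rw [Finset.mem_range] at hk
    have h1 : c + b + (k : ℂ) = (1 - a - n) + ((a + b + c + n - 1) + k) := by ring
    rw [h1, rf_vandermonde]
    have e1 : n - k + 1 = n + 1 - k := by omega
    rw [e1, Finset.mul_sum, Finset.sum_mul, Finset.sum_mul]
    refine Finset.sum_congr rfl fun j hj => ?_
    rw [Finset.mem_range] at hj
    have eA : risingFactorial (a + b + c + n - 1) k *
        risingFactorial ((a + b + c + n - 1) + k) (n - k - j)
        = risingFactorial (a + b + c + n - 1) (n - j) := by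
      rw [← rf_add]; congr 1; omega
    have eD : risingFactorial (a + c + k) (n - k)
        = risingFactorial (a + c + k) (n - j - k) *
            risingFactorial (a + c + (n - j : ℕ)) j := by
      have h2 : n - k = (n - j - k) + j := by omega
      rw [h2, rf_add]
      congr 2
      have : ((n - j - k : ℕ) : ℂ) = ((n - j : ℕ) : ℂ) - k := by
        rw [← Nat.cast_sub (by omega : k ≤ n - j)]
      rw [this]; ring
    rw [eD, ← eA]; ring
  rw [Finset.sum_congr rfl step1, sum_triangle_swap]
  have step3 : ∀ j ∈ Finset.range (n + 1),
      (∑ k ∈ Finset.range (n + 1 - j),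
        (-1 : ℂ) ^ k * (n.choose k : ℂ) * ((n - k).choose j : ℂ) *
          risingFactorial (1 - a - n) j * risingFactorial (a + b + c + n - 1) (n - j) *
            risingFactorial c k * risingFactorial (a + c + k) (n - j - k) *
              risingFactorial (a + c + (n - j : ℕ)) j)
      = (n.choose j : ℂ) * risingFactorial (1 - a - n) j *
          risingFactorial (a + b + c + n - 1) (n - j) *
            risingFactorial (a + c + (n - j : ℕ)) j * risingFactorial a (n - j) := by
    intro j hj
    rw [Finset.mem_range] at hj
    have e5 : ∀ k ∈ Finset.range (n + 1 - j),
        (-1 : ℂ) ^ k * (n.choose k : ℂ) * ((n - k).choose j : ℂ) *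
          risingFactorial (1 - a - n) j * risingFactorial (a + b + c + n - 1) (n - j) *
            risingFactorial c k * risingFactorial (a + c + k) (n - j - k) *
              risingFactorial (a + c + (n - j : ℕ)) j
        = ((n.choose j : ℂ) * risingFactorial (1 - a - n) j *
            risingFactorial (a + b + c + n - 1) (n - j) *
              risingFactorial (a + c + (n - j : ℕ)) j) *
            ((-1) ^ k * ((n - j).choose k : ℂ) * risingFactorial c k *
              risingFactorial ((a + c) + k) (n - j - k)) := by
      intro k hk
      rw [Finset.mem_range] at hk
      have hc : (n.choose k : ℂ) * ((n - k).choose j : ℂ)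
          = (n.choose j : ℂ) * ((n - j).choose k : ℂ) := by
        exact_mod_cast trinom (by omega : k + j ≤ n)
      calc (-1 : ℂ) ^ k * (n.choose k : ℂ) * ((n - k).choose j : ℂ) *
          risingFactorial (1 - a - n) j * risingFactorial (a + b + c + n - 1) (n - j) *
            risingFactorial c k * risingFactorial (a + c + k) (n - j - k) *
              risingFactorial (a + c + (n - j : ℕ)) j
          = ((n.choose k : ℂ) * ((n - k).choose j : ℂ)) *
              ((-1) ^ k * risingFactorial (1 - a - n) j *
                risingFactorial (a + b + c + n - 1) (n - j) *
                  risingFactorial c k * risingFactorial (a + c + k) (n - j - k) *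
                    risingFactorial (a + c + (n - j : ℕ)) j) := by ring
        _ = _ := by rw [hc]; ring
    rw [Finset.sum_congr rfl e5, ← Finset.mul_sum]
    have e6 : n + 1 - j = (n - j) + 1 := by omega
    rw [e6, rf_T c (a + c) (n - j)]
    have : a + c - c = a := by ring
    rw [this]
  rw [Finset.sum_congr rfl step3]
  have step4 : ∀ j ∈ Finset.range (n + 1),
      (n.choose j : ℂ) * risingFactorial (1 - a - n) j *
          risingFactorial (a + b + c + n - 1) (n - j) *
            risingFactorial (a + c + (n - j : ℕ)) j * risingFactorial a (n - j)
      = risingFactorial a n * ((-1) ^ j * (n.choose j : ℂ) *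
          risingFactorial (a + b + c + n - 1) (n - j) *
            risingFactorial (a + c + (n - j : ℕ)) j) := by
    intro j hj
    rw [Finset.mem_range] at hj
    have hrefl : risingFactorial (1 - a - n) j
        = (-1) ^ j * risingFactorial (a + (n - j : ℕ)) j := by
      have h : (1 : ℂ) - a - n = 1 - (a + (n - j : ℕ)) - j := by
        rw [Nat.cast_sub (by omega : j ≤ n)]; ring
      rw [h, rf_reflect]
    have hsplit : risingFactorial a (n - j) * risingFactorial (a + (n - j : ℕ)) j
        = risingFactorial a n := by
      rw [← rf_add]; congr 1; omega
    calc (n.choose j : ℂ) * risingFactorial (1 - a - n) j *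
          risingFactorial (a + b + c + n - 1) (n - j) *
            risingFactorial (a + c + (n - j : ℕ)) j * risingFactorial a (n - j)
        = (-1) ^ j * (n.choose j : ℂ) *
            risingFactorial (a + b + c + n - 1) (n - j) *
              risingFactorial (a + c + (n - j : ℕ)) j *
                (risingFactorial a (n - j) * risingFactorial (a + (n - j : ℕ)) j) := by
          rw [hrefl]; ring
      _ = _ := by rw [hsplit]; ring
  rw [Finset.sum_congr rfl step4, ← Finset.mul_sum]
  have step5 : (∑ j ∈ Finset.range (n + 1), (-1 : ℂ) ^ j * (n.choose j : ℂ) *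
      risingFactorial (a + b + c + n - 1) (n - j) *
        risingFactorial (a + c + (n - j : ℕ)) j) = risingFactorial b n := by
    rw [← Finset.sum_range_reflect]
    have e7 : ∀ j ∈ Finset.range (n + 1),
        (-1 : ℂ) ^ (n + 1 - 1 - j) * (n.choose (n + 1 - 1 - j) : ℂ) *
          risingFactorial (a + b + c + n - 1) (n - (n + 1 - 1 - j)) *
            risingFactorial (a + c + ((n - (n + 1 - 1 - j) : ℕ))) (n + 1 - 1 - j)
        = (-1) ^ n * ((-1) ^ j * (n.choose j : ℂ) *
            risingFactorial (a + b + c + n - 1) j *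
              risingFactorial ((a + c) + j) (n - j)) := by
      intro j hj
      rw [Finset.mem_range] at hj
      have h0 : n + 1 - 1 - j = n - j := by omega
      have h1 : n - (n - j) = j := by omega
      have h2 : n.choose (n - j) = n.choose j := Nat.choose_symm (by omega)
      have h3 : (-1 : ℂ) ^ (n - j) = (-1) ^ n * (-1) ^ j := by
        have h4 : (-1 : ℂ) ^ (n - j) * (-1) ^ j = (-1) ^ n := by
          rw [← pow_add]; congr 1; omega
        calc (-1 : ℂ) ^ (n - j) = (-1) ^ (n - j) * ((-1) ^ j * (-1) ^ j) := by
              rw [neg_one_pow_pair]; ring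
          _ = (-1) ^ n * (-1) ^ j := by rw [← mul_assoc, h4]
      rw [h0, h1, h2, h3]
      ring
    rw [Finset.sum_congr rfl e7, ← Finset.mul_sum, rf_T (a + b + c + n - 1) (a + c) n]
    have h5 : a + c - (a + b + c + (n : ℂ) - 1) = 1 - b - n := by ring
    rw [h5, rf_reflect, ← mul_assoc, neg_one_pow_pair, one_mul]
  rw [step5]
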